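/- arXiv:1911.06247 — 3 statements merged into one kernel-verified Lean document; each statement's English description precedes it below -/
import Mathlib

section
/- For every ε > 0 there exists a constant c = c(ε) > 0 with the following property: for every integer E ≥ 2, every toral eigenfunction f with frequency E, every radius s with E^{−1/2+ε} ≤ s ≤ 1 and every z ∈ ℝ², the nodal length satisfies ℒ_f(s,z) ≥ c·s²·√E. -/
open MeasureTheory Metric

noncomputable section

/-- The set of lattice points on the circle of radius `√E`. -/
def latticeE (E : ℕ) : Finset (ℤ × ℤ) :=
  ((Finset.Icc (-(E : ℤ)) (E : ℤ)) ×ˢ (Finset.Icc (-(E : ℤ)) (E : ℤ))).filter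
    (fun ξ => ξ.1 ^ 2 + ξ.2 ^ 2 = (E : ℤ))

/-- A toral eigenfunction with frequency `E`: a real-valued trigonometric polynomial
`f(x) = ∑_{‖ξ‖² = E} a_ξ e^{2πi⟨ξ,x⟩}` with `a_{-ξ} = conj (a_ξ)` and not all
coefficients zero. -/
def IsToralEigenfunction (E : ℕ) (f : EuclideanSpace ℝ (Fin 2) → ℝ) : Prop :=
  ∃ a : ℤ × ℤ → ℂ,
    (∀ ξ : ℤ × ℤ, a (-ξ) = starRingEnd ℂ (a ξ)) ∧
    (∃ ξ ∈ latticeE E, a ξ ≠ 0) ∧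
    ∀ x : EuclideanSpace ℝ (Fin 2),
      (f x : ℂ) = ∑ ξ ∈ latticeE E,
        a ξ * Complex.exp (2 * Real.pi * Complex.I *
          ((ξ.1 : ℂ) * (x 0 : ℂ) + (ξ.2 : ℂ) * (x 1 : ℂ)))

/-!
A toral eigenfunction is a sum of plane waves with frequencies on the circle of radius `√E`, so
its integral over the circle of radius `r` about `z` is `f z · 2π J₀(2π r √E)`. Since
`J₀(3) < 0`, `f` cannot keep a strict sign on a disc of radius `3 / (2π √E) < 1 / (2 √E)`: every
such disc contains a zero. About a zero `x₀` all circle integrals vanish, so `f` vanishes on every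
circle centred at `x₀`, and projecting by `dist · x₀` shows that the nodal set has length at least
`ρ` in `B(x₀, ρ)`. A zero next to each point of a grid of mesh `3 / √E` in `B(z, s)` gives
`≍ s² E` disjoint such discs of radius `1 / √E`, hence nodal length `≳ s² √E`.
-/

open Real Finset Set
open Complex (I arg)
open scoped Nat ENNReal Complex

local notation "ℝ²" => EuclideanSpace ℝ (Fin 2)

def cosTaylor (n : ℕ) (x : ℝ) : ℝ := ∑ k ∈ range n, (-1) ^ k * x ^ (2 * k) / (2 * k)!

def sinTaylor (n : ℕ) (x : ℝ) : ℝ := ∑ k ∈ range n, (-1) ^ k * x ^ (2 * k + 1) / (2 * k + 1)!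

theorem hasDerivAt_mul_pow_succ_div_factorial (c : ℝ) (m : ℕ) (x : ℝ) :
    HasDerivAt (fun y => c * y ^ (m + 1) / (m + 1)!) (c * x ^ m / m !) x := by
  refine (((hasDerivAt_pow (m + 1) x).const_mul c).div_const ((m + 1)! : ℝ)).congr_deriv ?_
  rw [Nat.factorial_succ]
  push_cast
  field_simp

theorem hasDerivAt_sinTaylor (n : ℕ) (x : ℝ) : HasDerivAt (sinTaylor n) (cosTaylor n x) x :=
  HasDerivAt.fun_sum fun k _ => hasDerivAt_mul_pow_succ_div_factorial _ (2 * k) x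

theorem hasDerivAt_cosTaylor_succ (n : ℕ) (x : ℝ) :
    HasDerivAt (cosTaylor (n + 1)) (-sinTaylor n x) x := by
  have h : cosTaylor (n + 1) =
      fun y => ∑ k ∈ range n, (-1 : ℝ) ^ (k + 1) * y ^ (2 * k + 1 + 1) / (2 * k + 1 + 1)! + 1 := by
    ext y
    simp [cosTaylor, sum_range_succ', mul_add]
  rw [h, sinTaylor, ← sum_neg_distrib]
  refine (HasDerivAt.fun_sum fun k _ =>
    hasDerivAt_mul_pow_succ_div_factorial _ (2 * k + 1) x).add_const 1 |>.congr_deriv ?_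
  refine sum_congr rfl fun k _ => ?_
  ring

theorem nonneg_of_hasDerivAt_of_nonneg {F F' : ℝ → ℝ} (hF : ∀ x, HasDerivAt F (F' x) x)
    (h0 : F 0 = 0) (hF' : ∀ x, 0 ≤ x → 0 ≤ F' x) {x : ℝ} (hx : 0 ≤ x) : 0 ≤ F x :=
  h0 ▸ monotoneOn_of_hasDerivWithinAt_nonneg (convex_Ici 0)
    (fun y _ => (hF y).continuousAt.continuousWithinAt)
    (fun y _ => (hF y).hasDerivWithinAt) (fun y hy => hF' y (interior_subset hy))
    self_mem_Ici hx hx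

theorem cosTaylor_alternating (n : ℕ) {x : ℝ} (hx : 0 ≤ x) :
    0 ≤ (-1) ^ (n + 1) * (cos x - cosTaylor (n + 1) x) := by
  induction n generalizing x with
  | zero => simpa [cosTaylor] using cos_le_one x
  | succ n ih =>
    have hsin : ∀ y, 0 ≤ y → 0 ≤ (-1) ^ (n + 1) * (sin y - sinTaylor (n + 1) y) :=
      fun y hy => nonneg_of_hasDerivAt_of_nonneg
        (fun y => ((hasDerivAt_sin y).sub (hasDerivAt_sinTaylor _ y)).const_mul _)
        (by simp [sinTaylor]) (fun y hy => ih hy) hy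
    refine nonneg_of_hasDerivAt_of_nonneg
      (fun y => ((hasDerivAt_cos y).sub (hasDerivAt_cosTaylor_succ _ y)).const_mul _)
      (by simp [cosTaylor, sum_range_succ']) (fun y hy => ?_) hx
    convert hsin y hy using 1
    ring

theorem cos_le_cosTaylor (m : ℕ) (x : ℝ) : cos x ≤ cosTaylor (2 * m + 1) x := by
  have h (y : ℝ) (hy : 0 ≤ y) : cos y ≤ cosTaylor (2 * m + 1) y := by
    have := cosTaylor_alternating (2 * m) hy
    rw [pow_succ, pow_mul] at this
    norm_num at this
    linarith
  rcases le_total 0 x with hx | hx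
  · exact h x hx
  · simpa [cosTaylor, Even.neg_pow (even_two_mul _)] using h (-x) (neg_nonneg.2 hx)

theorem integral_cos_pow_even (n : ℕ) :
    ∫ x in 0..2 * π, cos x ^ (2 * n) =
      2 * π * ∏ i ∈ range n, (2 * (i : ℝ) + 1) / (2 * i + 2) := by
  induction n with
  | zero => simp
  | succ k ih =>
    rw [prod_range_succ_comm, mul_left_comm, ← ih, Nat.mul_succ, integral_cos_pow]
    simp [sin_two_pi]

theorem integral_cosTaylor_mul_cos (n : ℕ) (t : ℝ) :
    ∫ θ in 0..2 * π, cosTaylor n (t * cos θ) =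
      2 * π * ∑ k ∈ range n, (-1) ^ k * t ^ (2 * k) / (2 * k)! *
        ∏ i ∈ range k, (2 * (i : ℝ) + 1) / (2 * i + 2) := by
  simp_rw [cosTaylor, mul_pow, mul_sum]
  rw [intervalIntegral.integral_finsetSum fun k _ => by
    apply Continuous.intervalIntegrable; fun_prop]
  refine sum_congr rfl fun k _ => ?_
  simp_rw [mul_div_right_comm, ← mul_assoc]
  rw [intervalIntegral.integral_const_mul, integral_cos_pow_even]
  ring

theorem integral_cos_three_mul_cos_neg : ∫ θ in 0..2 * π, cos (3 * cos θ) < 0 := by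
  calc ∫ θ in 0..2 * π, cos (3 * cos θ)
      ≤ ∫ θ in 0..2 * π, cosTaylor 5 (3 * cos θ) :=
        intervalIntegral.integral_mono_on (by positivity)
          (by apply Continuous.intervalIntegrable; fun_prop)
          (by apply Continuous.intervalIntegrable; unfold cosTaylor; fun_prop)
          fun θ _ => cos_le_cosTaylor 2 _
    -- `2π J₀(3) ≈ -1.63`, and the degree-8 Taylor bound is still `≈ -1.61`
    _ < 0 := by
      rw [integral_cosTaylor_mul_cos]
      norm_num [sum_range_succ, prod_range_succ, Nat.factorial]
      positivity

/-- Bessel's integral: `besselJ0Integral t = 2π J₀(t)`. -/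
def besselJ0Integral (t : ℝ) : ℂ := ∫ θ in 0..2 * π, cexp (I * ↑(t * cos θ))

theorem integral_exp_I_mul_cos_add_sin (α β : ℝ) :
    ∫ θ in 0..2 * π, cexp (I * ↑(α * cos θ + β * sin θ)) =
      besselJ0Integral √(α ^ 2 + β ^ 2) := by
  set w : ℂ := ⟨α, β⟩
  set ψ := arg w
  have hnorm : ‖w‖ = √(α ^ 2 + β ^ 2) := by
    rw [Complex.norm_def, Complex.normSq_mk]; ring_nf
  have hrot (θ : ℝ) : α * cos θ + β * sin θ = ‖w‖ * cos (θ - ψ) := by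
    have hc := Complex.norm_mul_cos_arg w
    have hs := Complex.norm_mul_sin_arg w
    rw [cos_sub]
    simp only [w] at hc hs
    linear_combination (-cos θ) * hc - sin θ * hs
  let g : ℝ → ℂ := fun θ => cexp (I * ↑(‖w‖ * cos θ))
  have hg : Function.Periodic g (2 * π) := fun θ => by simp only [g, cos_add_two_pi]
  calc ∫ θ in 0..2 * π, cexp (I * ↑(α * cos θ + β * sin θ))
      = ∫ θ in 0..2 * π, g (θ - ψ) := by simp_rw [hrot, g]
    _ = ∫ θ in -ψ..-ψ + 2 * π, g θ := by
      rw [intervalIntegral.integral_comp_sub_right]; ring_nf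
    _ = besselJ0Integral √(α ^ 2 + β ^ 2) := by
      rw [hg.intervalIntegral_add_eq (-ψ) 0, zero_add, ← hnorm]; rfl

theorem re_besselJ0Integral (t : ℝ) :
    (besselJ0Integral t).re = ∫ θ in 0..2 * π, cos (t * cos θ) := by
  rw [besselJ0Integral, ← Complex.reCLM_apply, ← ContinuousLinearMap.intervalIntegral_comp_comm]
  · simp only [Complex.reCLM_apply, mul_comm I, Complex.exp_ofReal_mul_I_re]
  · apply Continuous.intervalIntegrable; fun_prop

def circlePoint (z : ℝ²) (r θ : ℝ) : ℝ² := z + r • !₂[cos θ, sin θ]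

@[simp]
theorem circlePoint_apply_zero (z : ℝ²) (r θ : ℝ) :
    circlePoint z r θ 0 = z 0 + r * cos θ := by
  simp [circlePoint]

@[simp]
theorem circlePoint_apply_one (z : ℝ²) (r θ : ℝ) :
    circlePoint z r θ 1 = z 1 + r * sin θ := by
  simp [circlePoint]

theorem dist_circlePoint (z : ℝ²) (r θ : ℝ) : dist (circlePoint z r θ) z = |r| := by
  simp [circlePoint, dist_eq_norm, norm_smul, EuclideanSpace.norm_eq]

theorem continuous_circlePoint (z : ℝ²) (r : ℝ) : Continuous (circlePoint z r) := by
  unfold circlePoint; fun_prop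

theorem integral_exp_circlePoint (a b : ℝ) (z : ℝ²) {r : ℝ} (hr : 0 ≤ r) :
    ∫ θ in 0..2 * π,
        cexp (2 * π * I * (a * (circlePoint z r θ 0 : ℂ) + b * (circlePoint z r θ 1 : ℂ))) =
      cexp (2 * π * I * (a * (z 0 : ℂ) + b * (z 1 : ℂ))) *
        besselJ0Integral (2 * π * r * √(a ^ 2 + b ^ 2)) := by
  have hsplit (θ : ℝ) :
      2 * π * I * (a * (circlePoint z r θ 0 : ℂ) + b * (circlePoint z r θ 1 : ℂ)) =
        2 * π * I * (a * (z 0 : ℂ) + b * (z 1 : ℂ)) +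
          I * ↑((2 * π * r * a) * cos θ + (2 * π * r * b) * sin θ) := by
    simp only [circlePoint_apply_zero, circlePoint_apply_one]
    push_cast
    ring
  simp_rw [hsplit, Complex.exp_add]
  rw [intervalIntegral.integral_const_mul, integral_exp_I_mul_cos_add_sin]
  congr 2
  rw [show (2 * π * r * a) ^ 2 + (2 * π * r * b) ^ 2 = (2 * π * r) ^ 2 * (a ^ 2 + b ^ 2) by ring,
    Real.sqrt_mul' _ (by positivity), Real.sqrt_sq (by positivity)]

theorem exists_zero_of_mul_integral_nonpos {X : Type*} [TopologicalSpace X] {f : X → ℝ}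
    {S : Set X} (hS : IsPreconnected S) (hf : ContinuousOn f S) {w : X} (hw : w ∈ S)
    {γ : ℝ → X} (hγ : Continuous γ) (hγS : ∀ θ, γ θ ∈ S) {a b : ℝ} (hab : a < b)
    (h : f w * ∫ θ in a..b, f (γ θ) ≤ 0) : ∃ x ∈ S, f x = 0 := by
  by_contra! hne
  have hsign (x : X) (hx : x ∈ S) : 0 < f w * f x := by
    by_contra! hle
    obtain ⟨y, hyS, hy⟩ := hS.intermediate_value₂ hx hw (f := fun y => f w * f y)
      (g := fun _ => 0) (continuousOn_const.mul hf) continuousOn_const hle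
      (mul_self_pos.2 (hne w hw)).le
    exact hne y hyS ((mul_eq_zero.1 hy).resolve_left (hne w hw))
  have hfγ : Continuous fun θ => f (γ θ) := hf.comp_continuous hγ hγS
  have hpos : 0 < ∫ θ in a..b, f w * f (γ θ) :=
    intervalIntegral.intervalIntegral_pos_of_pos_on
      ((continuous_const.mul hfγ).intervalIntegrable a b) (fun θ _ => hsign _ (hγS θ)) hab
  rw [intervalIntegral.integral_const_mul] at hpos
  linarith

namespace IsToralEigenfunction

variable {E : ℕ} {f : ℝ² → ℝ}

theorem continuous (hf : IsToralEigenfunction E f) : Continuous f := by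
  obtain ⟨a, -, -, hfa⟩ := hf
  have : f = fun x => (∑ ξ ∈ latticeE E, a ξ * cexp (2 * π * I *
      ((ξ.1 : ℂ) * (x 0 : ℂ) + (ξ.2 : ℂ) * (x 1 : ℂ)))).re := by
    ext x; rw [← hfa, Complex.ofReal_re]
  rw [this]
  fun_prop

theorem integral_circlePoint (hf : IsToralEigenfunction E f) (z : ℝ²) {r : ℝ} (hr : 0 ≤ r) :
    ∫ θ in 0..2 * π, f (circlePoint z r θ) = f z * (besselJ0Integral (2 * π * r * √E)).re := by
  obtain ⟨a, -, -, hfa⟩ := hf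
  have hwave (ξ : ℤ × ℤ) (hξ : ξ ∈ latticeE E) :
      ∫ θ in 0..2 * π, a ξ * cexp (2 * π * I *
        ((ξ.1 : ℂ) * (circlePoint z r θ 0 : ℂ) + (ξ.2 : ℂ) * (circlePoint z r θ 1 : ℂ))) =
      a ξ * cexp (2 * π * I * ((ξ.1 : ℂ) * (z 0 : ℂ) + (ξ.2 : ℂ) * (z 1 : ℂ))) *
        besselJ0Integral (2 * π * r * √E) := by
    have hE : (ξ.1 : ℝ) ^ 2 + (ξ.2 : ℝ) ^ 2 = E := by
      simp only [latticeE, Finset.mem_filter] at hξ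
      exact_mod_cast hξ.2
    have h := integral_exp_circlePoint ξ.1 ξ.2 z hr
    rw [hE] at h
    push_cast at h
    rw [intervalIntegral.integral_const_mul, h]
    ring
  calc ∫ θ in 0..2 * π, f (circlePoint z r θ)
      = (∫ θ in 0..2 * π, (f (circlePoint z r θ) : ℂ)).re := by
        rw [intervalIntegral.integral_ofReal, Complex.ofReal_re]
    _ = ((f z : ℂ) * besselJ0Integral (2 * π * r * √E)).re := by
        simp_rw [hfa]
        rw [intervalIntegral.integral_finsetSum fun ξ _ => by
            apply Continuous.intervalIntegrable
            simp only [circlePoint_apply_zero, circlePoint_apply_one]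
            fun_prop,
          sum_congr rfl hwave, ← sum_mul]
    _ = f z * (besselJ0Integral (2 * π * r * √E)).re := by
        rw [Complex.re_ofReal_mul]

theorem exists_zero_dist_le (hf : IsToralEigenfunction E f) (hE : 0 < E) (w : ℝ²) :
    ∃ x, f x = 0 ∧ dist x w ≤ (√E)⁻¹ / 2 := by
  set r₀ := 3 / (2 * π * √E)
  have hr₀ : 0 ≤ r₀ := by positivity
  have h3 : 2 * π * r₀ * √E = 3 := by simp only [r₀]; field_simp
  obtain ⟨x, hx, hx0⟩ := exists_zero_of_mul_integral_nonpos
    (convex_closedBall w r₀).isPreconnected hf.continuous.continuousOn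
    (mem_closedBall_self hr₀) (continuous_circlePoint w r₀)
    (fun θ => by simp [dist_circlePoint, abs_of_nonneg hr₀]) two_pi_pos
    (by
      rw [hf.integral_circlePoint w hr₀, h3, re_besselJ0Integral, ← mul_assoc]
      exact mul_nonpos_of_nonneg_of_nonpos (mul_self_nonneg _)
        integral_cos_three_mul_cos_neg.le)
  refine ⟨x, hx0, (mem_closedBall.1 hx).trans ?_⟩
  rw [div_le_iff₀ (by positivity)]
  field_simp
  nlinarith [pi_gt_three]

theorem exists_zero_dist_eq (hf : IsToralEigenfunction E f) {x₀ : ℝ²} (h₀ : f x₀ = 0) {r : ℝ}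
    (hr : 0 ≤ r) : ∃ x, f x = 0 ∧ dist x x₀ = r := by
  obtain ⟨_, ⟨θ, rfl⟩, hθ⟩ := exists_zero_of_mul_integral_nonpos
    (isPreconnected_range (continuous_circlePoint x₀ r)) hf.continuous.continuousOn
    (mem_range_self 0) (continuous_circlePoint x₀ r) mem_range_self two_pi_pos (by simp [hf.integral_circlePoint x₀ hr, h₀])
  exact ⟨_, hθ, by rw [dist_circlePoint, abs_of_nonneg hr]⟩

end IsToralEigenfunction

section NodalLength

variable {X : Type*} [MetricSpace X] [MeasurableSpace X] [BorelSpace X]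

theorem ofReal_le_hausdorffMeasure_of_forall_exists_dist_eq {S : Set X} {x₀ : X} {ρ : ℝ}
    (h : ∀ r ∈ Ioo 0 ρ, ∃ y ∈ S, dist y x₀ = r) : ENNReal.ofReal ρ ≤ μH[1] S :=
  calc ENNReal.ofReal ρ = μH[1] (Ioo 0 ρ) := by
        rw [hausdorffMeasure_real, Real.volume_Ioo, sub_zero]
    _ ≤ μH[1] ((dist · x₀) '' S) := measure_mono fun r hr => by
        obtain ⟨y, hy, rfl⟩ := h r hr
        exact mem_image_of_mem _ hy
    _ ≤ μH[1] S := by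
        simpa using (LipschitzWith.dist_left x₀).hausdorffMeasure_image_le zero_le_one S

theorem card_mul_ofReal_le_hausdorffMeasure_inter {Z U : Set X} (hZ : MeasurableSet Z)
    (hsphere : ∀ x ∈ Z, ∀ r, 0 < r → ∃ y ∈ Z, dist y x = r) {ι : Type*} {P : Finset ι}
    {x : ι → X} (hxZ : ∀ i ∈ P, x i ∈ Z) {t : ℝ}
    (hsep : ∀ i ∈ P, ∀ j ∈ P, i ≠ j → 2 * t ≤ dist (x i) (x j))
    (hsub : ∀ i ∈ P, ball (x i) t ⊆ U) :
    #P * ENNReal.ofReal t ≤ μH[1] (U ∩ Z) := by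
  have hdisj : (P : Set ι).PairwiseDisjoint fun i => ball (x i) t ∩ Z :=
    fun i hi j hj hij => (ball_disjoint_ball (by linarith [hsep i hi j hj hij])).mono
      inter_subset_left inter_subset_left
  calc #P * ENNReal.ofReal t = ∑ i ∈ P, ENNReal.ofReal t := by rw [sum_const, nsmul_eq_mul]
    _ ≤ ∑ i ∈ P, μH[1] (ball (x i) t ∩ Z) := sum_le_sum fun i hi =>
        ofReal_le_hausdorffMeasure_of_forall_exists_dist_eq fun r hr => by
          obtain ⟨y, hyZ, hy⟩ := hsphere (x i) (hxZ i hi) r hr.1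
          exact ⟨y, ⟨mem_ball.2 (hy.trans_lt hr.2), hyZ⟩, hy⟩
    _ = μH[1] (⋃ i ∈ P, ball (x i) t ∩ Z) :=
        (measure_biUnion_finset hdisj fun i _ => isOpen_ball.measurableSet.inter hZ).symm
    _ ≤ μH[1] (U ∩ Z) :=
        measure_mono (iUnion₂_subset fun i hi => inter_subset_inter_left Z (hsub i hi))

end NodalLength

def gridPoint (z : ℝ²) (δ : ℝ) (p : ℕ × ℕ) : ℝ² := z + δ • !₂[(p.1 : ℝ), p.2]

theorem dist_gridPoint_le (z : ℝ²) {δ : ℝ} (hδ : 0 ≤ δ) (p : ℕ × ℕ) :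
    dist (gridPoint z δ p) z ≤ δ * (p.1 + p.2) := by
  simp only [gridPoint, dist_eq_norm, add_sub_cancel_left, norm_smul, Real.norm_of_nonneg hδ,
    EuclideanSpace.norm_eq]
  gcongr
  rw [Real.sqrt_le_iff]
  constructor
  · positivity
  · have : (0 : ℝ) ≤ p.1 * p.2 := by positivity
    simp [Fin.sum_univ_two]
    nlinarith

theorem le_dist_gridPoint (z : ℝ²) {δ : ℝ} (hδ : 0 ≤ δ) {p q : ℕ × ℕ} (hpq : p ≠ q) :
    δ ≤ dist (gridPoint z δ p) (gridPoint z δ q) := by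
  have hnat {m n : ℕ} (h : m ≠ n) : 1 ≤ ‖(m : ℝ) - n‖ := by
    rw [Real.norm_eq_abs]
    exact_mod_cast Int.one_le_abs (sub_ne_zero.2 (Int.natCast_inj.not.2 h))
  obtain ⟨i, hi⟩ : ∃ i, 1 ≤ ‖(!₂[(p.1 : ℝ), p.2] - !₂[(q.1 : ℝ), q.2]) i‖ := by
    by_cases h1 : p.1 = q.1
    · exact ⟨1, by simpa using hnat fun h2 => hpq (Prod.ext h1 h2)⟩
    · exact ⟨0, by simpa using hnat h1⟩
  rw [gridPoint, gridPoint, dist_add_left, dist_eq_norm, ← smul_sub, norm_smul,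
    Real.norm_of_nonneg hδ]
  exact le_mul_of_one_le_right hδ (hi.trans (PiLp.norm_apply_le _ i))

section Packing

variable {Z : Set ℝ²} {ρ : ℝ}

theorem mul_self_mul_ofReal_le_hausdorffMeasure_ball_inter (hZ : MeasurableSet Z)
    (hsphere : ∀ x ∈ Z, ∀ r, 0 < r → ∃ y ∈ Z, dist y x = r) (hρ : 0 ≤ ρ)
    (hnet : ∀ w, ∃ x ∈ Z, dist x w ≤ ρ / 2) (z : ℝ²) {s : ℝ} {n : ℕ}
    (hn : 3 * ρ / 2 + 6 * ρ * n ≤ s) :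
    (n * n : ℝ≥0∞) * ENNReal.ofReal ρ ≤ μH[1] (ball z s ∩ Z) := by
  set g := gridPoint z (3 * ρ)
  choose x hxZ hx using fun p => hnet (g p)
  have hsep (p q : ℕ × ℕ) (hpq : p ≠ q) : 2 * ρ ≤ dist (x p) (x q) := by
    have : 3 * ρ ≤ dist (g p) (g q) := le_dist_gridPoint z (by positivity) hpq
    linarith [hx p, hx q, dist_comm (g p) (x p), dist_triangle4 (g p) (x p) (x q) (g q)]
  have hsub (p : ℕ × ℕ) (hp : p ∈ range n ×ˢ range n) :
      ball (x p) ρ ⊆ ball z s := fun y hy => by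
    simp only [mem_product, Finset.mem_range] at hp
    have hp₁ : (p.1 : ℝ) ≤ n := by exact_mod_cast hp.1.le
    have hp₂ : (p.2 : ℝ) ≤ n := by exact_mod_cast hp.2.le
    have : dist (g p) z ≤ 3 * ρ * (p.1 + p.2) := dist_gridPoint_le z (by positivity) p
    have := dist_triangle4 y (x p) (g p) z
    rw [mem_ball] at hy ⊢
    nlinarith [hx p]
  simpa [card_product] using card_mul_ofReal_le_hausdorffMeasure_inter hZ hsphere
    (fun p _ => hxZ p) (fun p _ q _ => hsep p q) hsub

theorem ofReal_le_hausdorffMeasure_ball_inter (hZ : MeasurableSet Z)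
    (hsphere : ∀ x ∈ Z, ∀ r, 0 < r → ∃ y ∈ Z, dist y x = r) (hρ : 0 < ρ)
    (hnet : ∀ w, ∃ x ∈ Z, dist x w ≤ ρ / 2) {s : ℝ} (hs : ρ ≤ s) (z : ℝ²) :
    ENNReal.ofReal (s ^ 2 / (256 * ρ)) ≤ μH[1] (ball z s ∩ Z) := by
  have hs₀ : 0 < s := hρ.trans_le hs
  rcases lt_or_ge s (16 * ρ) with hsmall | hlarge
  · obtain ⟨x₀, hx₀Z, hx₀⟩ := hnet z
    calc ENNReal.ofReal (s ^ 2 / (256 * ρ)) ≤ ENNReal.ofReal (s / 2) := by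
          refine ENNReal.ofReal_le_ofReal ?_
          rw [div_le_iff₀ (by positivity)]
          nlinarith
      _ ≤ μH[1] (ball z s ∩ Z) :=
          ofReal_le_hausdorffMeasure_of_forall_exists_dist_eq fun r hr => by
            obtain ⟨y, hyZ, hy⟩ := hsphere x₀ hx₀Z r hr.1
            refine ⟨y, ⟨mem_ball.2 ?_, hyZ⟩, hy⟩
            linarith [dist_triangle y x₀ z, hr.2]
  · set n := ⌊s / (8 * ρ)⌋₊
    have hn_le : (n : ℝ) ≤ s / (8 * ρ) := Nat.floor_le (by positivity)
    have hn_ge : s / (16 * ρ) ≤ n := by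
      have := Nat.lt_floor_add_one (s / (8 * ρ))
      have : 2 ≤ s / (8 * ρ) := by rw [le_div_iff₀ (by positivity)]; linarith
      linarith [show s / (16 * ρ) = s / (8 * ρ) / 2 by ring]
    calc ENNReal.ofReal (s ^ 2 / (256 * ρ)) ≤ ENNReal.ofReal (n * n * ρ) := by
          gcongr
          calc s ^ 2 / (256 * ρ) = s / (16 * ρ) * (s / (16 * ρ)) * ρ := by field_simp; ring
            _ ≤ n * n * ρ := by gcongr
      _ = (n * n : ℝ≥0∞) * ENNReal.ofReal ρ := by
          rw [ENNReal.ofReal_mul (by positivity)]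
          norm_cast
      _ ≤ μH[1] (ball z s ∩ Z) :=
          mul_self_mul_ofReal_le_hausdorffMeasure_ball_inter hZ hsphere hρ.le hnet z (by
            have : 6 * ρ * n ≤ 3 / 4 * s := by
              calc 6 * ρ * n ≤ 6 * ρ * (s / (8 * ρ)) := by gcongr
                _ = 3 / 4 * s := by field_simp; ring
            linarith)

end Packing

/-- Lower bound in the small-scale Yau conjecture on the torus: for every `ε > 0` there is
`c = c(ε) > 0` such that for every `E ≥ 2`, every toral eigenfunction `f` of frequency `E`,
every radius `E^{-1/2+ε} ≤ s ≤ 1` and every centre `z`, the nodal length of `f` in `B(z,s)`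
is at least `c s² √E`. -/
theorem nodal_length_lower_bound :
    ∀ ε : ℝ, 0 < ε → ∃ c : ℝ, 0 < c ∧
      ∀ E : ℕ, 2 ≤ E →
        ∀ f : EuclideanSpace ℝ (Fin 2) → ℝ, IsToralEigenfunction E f →
          ∀ s : ℝ, (E : ℝ) ^ (-(1 : ℝ) / 2 + ε) ≤ s → s ≤ 1 →
            ∀ z : EuclideanSpace ℝ (Fin 2),
              ENNReal.ofReal (c * s ^ 2 * Real.sqrt E)
                ≤ μH[1] {x : EuclideanSpace ℝ (Fin 2) | x ∈ ball z s ∧ f x = 0} := by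
  intro ε hε
  refine ⟨1 / 256, by norm_num, fun E hE f hf s hs _ z => ?_⟩
  have hE₀ : 0 < E := by omega
  have hρs : (√E)⁻¹ ≤ s :=
    calc (√E)⁻¹ = (E : ℝ) ^ (-(1 : ℝ) / 2) := by
          rw [sqrt_eq_rpow, ← rpow_neg (Nat.cast_nonneg E)]; ring_nf
      _ ≤ (E : ℝ) ^ (-(1 : ℝ) / 2 + ε) :=
          rpow_le_rpow_of_exponent_le (Nat.one_le_cast.2 hE₀) (by linarith)
      _ ≤ s := hs
  calc ENNReal.ofReal (1 / 256 * s ^ 2 * √E) = ENNReal.ofReal (s ^ 2 / (256 * (√E)⁻¹)) := by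
        congr 1; field_simp
    _ ≤ _ := ofReal_le_hausdorffMeasure_ball_inter (Z := {x | f x = 0})
        (isClosed_eq hf.continuous continuous_const).measurableSet
        (fun x hx r hr => hf.exists_zero_dist_eq hx hr.le) (by positivity)
        (hf.exists_zero_dist_le hE₀) hρs z
end
end

section
/- There is an absolute constant C > 0 with the following property: let w ∈ ℂ, r > 0, and let h be holomorphic on the open disc D(w,r) with M := sup_{z ∈ D(w,r)} |h(z)| < ∞ and m := sup_{|z−w| ≤ r/2} |h(z)| > 0. Then the number of zeros of h in the closed disc {z : |z−w| ≤ r/2}, counted with multiplicity (i.e. the sum over those zeros of the vanishing order of h), is at most C·log(M/m). -/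
open MeasureTheory Metric ENNReal

noncomputable section

/-- The vanishing order of a holomorphic function `h` at a point `z`: the order of the
first nonvanishing term of its power-series expansion at `z`, i.e. the least `n` such
that the `n`-th derivative of `h` does not vanish at `z`. -/
def vanishingOrder (h : ℂ → ℂ) (z : ℂ) : ℕ :=
  sInf {n : ℕ | iteratedDeriv n h z ≠ 0}

/-!
Divide `h` successively by the Blaschke factors `ρ (z - a) / (ρ² - conj (a - w) (z - w))` of the
disc of radius `ρ = 3r/4` about `w`, one for each zero `a` of the half-disc, counted with
multiplicity. Such a factor has modulus one on the circle of radius `ρ` and modulus at most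
`2ρs / (ρ² + s²) = 12/13` on the disc of radius `s = r/2`. The maximum principle applied to the
quotient therefore gives `m ≤ M (12/13)^N` when there are `N` zeros, i.e.
`N ≤ log (M/m) / log (13/12)`.
-/

open Complex ComplexConjugate Topology

lemma vanishingOrder_le_analyticOrderAt {h : ℂ → ℂ} {z : ℂ} (hh : AnalyticAt ℂ h z) :
    (vanishingOrder h z : ℕ∞) ≤ analyticOrderAt h z := by
  -- Strict inequality only where `h` vanishes near `z`: then `vanishingOrder h z = sInf ∅ = 0`.
  cases hn : analyticOrderAt h z with
  | top => exact le_top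
  | coe n =>
    have hderiv := ((analyticOrderAt_eq_nat_iff_iteratedDeriv_eq_zero hh).1 hn).2
    exact_mod_cast Nat.sInf_le hderiv

/-- `(z - a) / blaschkeDenom w a ρ z` is the Blaschke factor of `closedBall w ρ` at `a`. -/
def blaschkeDenom (w a : ℂ) (ρ : ℝ) (z : ℂ) : ℂ :=
  ((ρ : ℂ) ^ 2 - conj (a - w) * (z - w)) / ρ

section Blaschke

variable {w a z : ℂ} {ρ s : ℝ}

lemma differentiable_blaschkeDenom : Differentiable ℂ (blaschkeDenom w a ρ) := by
  unfold blaschkeDenom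
  fun_prop

lemma sq_mul_sq_norm_blaschkeDenom (w a : ℂ) (ρ : ℝ) (z : ℂ) (hρ : ρ ≠ 0) :
    ρ ^ 2 * ‖blaschkeDenom w a ρ z‖ ^ 2
      = ρ ^ 2 * ‖z - a‖ ^ 2 + (ρ ^ 2 - ‖a - w‖ ^ 2) * (ρ ^ 2 - ‖z - w‖ ^ 2) := by
  have hz : z - a = (z - w) - (a - w) := by ring
  rw [blaschkeDenom, norm_div, norm_real, Real.norm_eq_abs, div_pow, sq_abs,
    mul_div_cancel₀ _ (pow_ne_zero 2 hρ), hz]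
  simp only [← normSq_eq_norm_sq, normSq_apply, sub_re, sub_im, mul_re, mul_im, conj_re,
    conj_im, ← Complex.ofReal_pow, ofReal_re, ofReal_im]
  ring

lemma blaschkeDenom_ne_zero (ha : ‖a - w‖ < ρ) (hz : ‖z - w‖ ≤ ρ) :
    blaschkeDenom w a ρ z ≠ 0 := by
  have hρ : 0 < ρ := (norm_nonneg _).trans_lt ha
  have hlt : ‖conj (a - w) * (z - w)‖ < ‖(ρ : ℂ) ^ 2‖ := by
    rw [norm_mul, norm_conj, norm_pow, norm_real, Real.norm_of_nonneg hρ.le, sq]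
    nlinarith [norm_nonneg (a - w), norm_nonneg (z - w)]
  refine div_ne_zero (sub_ne_zero.2 fun h => hlt.ne ?_) (ofReal_ne_zero.2 hρ.ne')
  rw [h]

lemma norm_blaschkeDenom_of_mem_sphere (hρ : ρ ≠ 0) (hz : z ∈ sphere w ρ) :
    ‖blaschkeDenom w a ρ z‖ = ‖z - a‖ := by
  have hzw : ‖z - w‖ = ρ := by rwa [mem_sphere_iff_norm] at hz
  have key := sq_mul_sq_norm_blaschkeDenom w a ρ z hρ
  rw [hzw, sub_self, mul_zero, add_zero] at key
  exact (pow_left_inj₀ (norm_nonneg _) (norm_nonneg _) two_ne_zero).1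
    (mul_left_cancel₀ (pow_ne_zero 2 hρ) key)

lemma norm_sub_le_mul_norm_blaschkeDenom (hsρ : s < ρ) (ha : a ∈ closedBall w s)
    (hz : z ∈ closedBall w s) :
    ‖z - a‖ ≤ 2 * ρ * s / (ρ ^ 2 + s ^ 2) * ‖blaschkeDenom w a ρ z‖ := by
  rw [mem_closedBall_iff_norm] at ha hz
  have hs : 0 ≤ s := (norm_nonneg _).trans ha
  have hρ : 0 < ρ := hs.trans_lt hsρ
  have key := sq_mul_sq_norm_blaschkeDenom w a ρ z hρ.ne'
  have hden : ρ * ‖blaschkeDenom w a ρ z‖ ≤ ρ ^ 2 + s ^ 2 := by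
    rw [blaschkeDenom, norm_div, norm_real, Real.norm_of_nonneg hρ.le, mul_div_cancel₀ _ hρ.ne']
    calc ‖(ρ : ℂ) ^ 2 - conj (a - w) * (z - w)‖ ≤ ‖(ρ : ℂ) ^ 2‖ + ‖conj (a - w) * (z - w)‖ :=
          norm_sub_le _ _
      _ ≤ ρ ^ 2 + s ^ 2 := by
          rw [norm_mul, norm_conj, norm_pow, norm_real, Real.norm_of_nonneg hρ.le, sq s]
          gcongr
  have hprod : (ρ ^ 2 - s ^ 2) ^ 2 ≤ (ρ ^ 2 - ‖a - w‖ ^ 2) * (ρ ^ 2 - ‖z - w‖ ^ 2) := by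
    have h1 : ‖a - w‖ ^ 2 ≤ s ^ 2 := pow_le_pow_left₀ (norm_nonneg _) ha 2
    have h2 : ‖z - w‖ ^ 2 ≤ s ^ 2 := pow_le_pow_left₀ (norm_nonneg _) hz 2
    rw [sq]
    exact mul_le_mul (by linarith) (by linarith) (by nlinarith) (by nlinarith)
  -- With `D = blaschkeDenom w a ρ z`, `key` reads `ρ²‖z - a‖² = ρ²‖D‖² - P` where `P ≥ (ρ² - s²)²`
  -- by `hprod`, and `ρ‖D‖ ≤ ρ² + s²` by `hden`.
  have hsq : ρ ^ 2 * (‖z - a‖ * (ρ ^ 2 + s ^ 2)) ^ 2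
      ≤ ρ ^ 2 * (2 * ρ * s * ‖blaschkeDenom w a ρ z‖) ^ 2 := by
    have h1 := mul_le_mul_of_nonneg_right hprod (sq_nonneg (ρ ^ 2 + s ^ 2))
    have h2 := mul_le_mul_of_nonneg_left (pow_le_pow_left₀ (by positivity) hden 2)
      (sq_nonneg (ρ ^ 2 - s ^ 2))
    nlinarith [congrArg (· * (ρ ^ 2 + s ^ 2) ^ 2) key]
  rw [div_mul_eq_mul_div, le_div_iff₀ (by positivity)]
  exact (pow_le_pow_iff_left₀ (by positivity) (by positivity) two_ne_zero).1
    (le_of_mul_le_mul_left hsq (by positivity))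

end Blaschke

/-- `f` divided by the Blaschke factor `(z - a) / blaschkeDenom w a ρ z`. -/
def blaschkeQuotient (f : ℂ → ℂ) (w a : ℂ) (ρ : ℝ) : ℂ → ℂ :=
  dslope f a * blaschkeDenom w a ρ

section BlaschkeQuotient

variable {f : ℂ → ℂ} {w a z : ℂ} {ρ s : ℝ}

lemma DifferentiableOn.blaschkeQuotient (hf : DifferentiableOn ℂ f (closedBall w ρ))
    (ha : a ∈ ball w ρ) : DifferentiableOn ℂ (blaschkeQuotient f w a ρ) (closedBall w ρ) :=
  ((differentiableOn_dslope (closedBall_mem_nhds_of_mem ha)).2 hf).mul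
    differentiable_blaschkeDenom.differentiableOn

lemma sub_mul_blaschkeQuotient (hfa : f a = 0) (z : ℂ) :
    (z - a) * blaschkeQuotient f w a ρ z = f z * blaschkeDenom w a ρ z := by
  rw [blaschkeQuotient, Pi.mul_apply, ← mul_assoc, ← smul_eq_mul (a := z - a), sub_smul_dslope,
    hfa, sub_zero]

lemma analyticOrderAt_eq_add_analyticOrderAt_blaschkeQuotient
    (hf : DifferentiableOn ℂ f (closedBall w ρ)) (hfa : f a = 0) (ha : a ∈ ball w ρ)
    {b : ℂ} (hb : b ∈ ball w ρ) :
    analyticOrderAt f b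
      = analyticOrderAt (· - a) b + analyticOrderAt (blaschkeQuotient f w a ρ) b := by
  have hnhds : closedBall w ρ ∈ 𝓝 b := closedBall_mem_nhds_of_mem hb
  have hD : AnalyticAt ℂ (blaschkeDenom w a ρ) b := differentiable_blaschkeDenom.analyticAt b
  have hD0 : analyticOrderAt (blaschkeDenom w a ρ) b = 0 :=
    hD.analyticOrderAt_eq_zero.2 (blaschkeDenom_ne_zero (mem_ball_iff_norm.1 ha)
      (mem_closedBall_iff_norm.1 (ball_subset_closedBall hb)))
  have hprod : (· - a) * blaschkeQuotient f w a ρ = f * blaschkeDenom w a ρ :=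
    funext (sub_mul_blaschkeQuotient hfa)
  have := congrArg (analyticOrderAt · b) hprod
  rwa [analyticOrderAt_mul (by fun_prop) ((hf.blaschkeQuotient ha).analyticAt hnhds),
    analyticOrderAt_mul (hf.analyticAt hnhds) hD, hD0, add_zero, eq_comm] at this

lemma norm_blaschkeQuotient_of_mem_sphere (hfa : f a = 0) (ha : a ∈ ball w ρ)
    (hz : z ∈ sphere w ρ) : ‖blaschkeQuotient f w a ρ z‖ = ‖f z‖ := by
  have hρ : ρ ≠ 0 := (pos_of_mem_ball ha).ne'
  have hza : ‖z - a‖ ≠ 0 := by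
    rw [← norm_blaschkeDenom_of_mem_sphere hρ hz]
    exact norm_ne_zero_iff.2 (blaschkeDenom_ne_zero (mem_ball_iff_norm.1 ha)
      (mem_sphere_iff_norm.1 hz).le)
  have := congrArg norm (sub_mul_blaschkeQuotient (ρ := ρ) (w := w) hfa z)
  rw [norm_mul, norm_mul, norm_blaschkeDenom_of_mem_sphere hρ hz, mul_comm (‖f z‖)] at this
  exact mul_left_cancel₀ hza this

lemma norm_le_mul_norm_blaschkeQuotient (hsρ : s < ρ) (hfa : f a = 0)
    (ha : a ∈ closedBall w s) (hz : z ∈ closedBall w s) :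
    ‖f z‖ ≤ 2 * ρ * s / (ρ ^ 2 + s ^ 2) * ‖blaschkeQuotient f w a ρ z‖ := by
  have hD : 0 < ‖blaschkeDenom w a ρ z‖ := norm_pos_iff.2 <| blaschkeDenom_ne_zero
    ((mem_closedBall_iff_norm.1 ha).trans_lt hsρ) ((mem_closedBall_iff_norm.1 hz).trans hsρ.le)
  have hprod := congrArg norm (sub_mul_blaschkeQuotient (ρ := ρ) (w := w) hfa z)
  rw [norm_mul, norm_mul] at hprod
  refine le_of_mul_le_mul_right ?_ hD
  calc ‖f z‖ * ‖blaschkeDenom w a ρ z‖ = ‖z - a‖ * ‖blaschkeQuotient f w a ρ z‖ := hprod.symm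
    _ ≤ 2 * ρ * s / (ρ ^ 2 + s ^ 2) * ‖blaschkeDenom w a ρ z‖ * ‖blaschkeQuotient f w a ρ z‖ :=
        mul_le_mul_of_nonneg_right (norm_sub_le_mul_norm_blaschkeDenom hsρ ha hz) (norm_nonneg _)
    _ = _ := by ring

end BlaschkeQuotient

lemma norm_le_of_forall_mem_sphere_norm_le {f : ℂ → ℂ} {w z : ℂ} {ρ M : ℝ} (hρ : 0 < ρ)
    (hf : DifferentiableOn ℂ f (closedBall w ρ)) (hM : ∀ z ∈ sphere w ρ, ‖f z‖ ≤ M)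
    (hz : z ∈ closedBall w ρ) : ‖f z‖ ≤ M := by
  rw [← closure_ball w hρ.ne'] at hf hz
  refine Complex.norm_le_of_forall_mem_frontier_norm_le isBounded_ball hf.diffContOnCl
    (fun z hz => hM z ?_) hz
  rwa [frontier_ball w hρ.ne'] at hz

theorem norm_le_mul_pow_of_le_sum_analyticOrderAt {f : ℂ → ℂ} {w z : ℂ} {s ρ M : ℝ}
    (hsρ : s < ρ) (hf : DifferentiableOn ℂ f (closedBall w ρ))
    (hM : ∀ z ∈ sphere w ρ, ‖f z‖ ≤ M) {t : Finset ℂ} (ht : ↑t ⊆ closedBall w s) {N : ℕ}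
    (hN : (N : ℕ∞) ≤ ∑ a ∈ t, analyticOrderAt f a) (hz : z ∈ closedBall w s) :
    ‖f z‖ ≤ M * (2 * ρ * s / (ρ ^ 2 + s ^ 2)) ^ N := by
  have hs : 0 ≤ s := dist_nonneg.trans hz
  have hρ : 0 < ρ := hs.trans_lt hsρ
  have hsub : closedBall w s ⊆ ball w ρ := closedBall_subset_ball hsρ
  induction N generalizing f with
  | zero =>
    rw [pow_zero, mul_one]
    exact norm_le_of_forall_mem_sphere_norm_le hρ hf hM
      (closedBall_subset_closedBall hsρ.le hz)
  | succ N ih =>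
    obtain ⟨a, hat, hord⟩ : ∃ a ∈ t, analyticOrderAt f a ≠ 0 := by
      refine Finset.exists_ne_zero_of_sum_ne_zero (ne_of_gt (lt_of_lt_of_le ?_ hN))
      exact_mod_cast N.succ_pos
    have ha : a ∈ closedBall w s := ht hat
    have hfa : f a = 0 := apply_eq_zero_of_analyticOrderAt_ne_zero hord
    set g := blaschkeQuotient f w a ρ
    have hsum : ∑ b ∈ t, analyticOrderAt f b = 1 + ∑ b ∈ t, analyticOrderAt g b := by
      rw [Finset.sum_congr rfl fun b hb => analyticOrderAt_eq_add_analyticOrderAt_blaschkeQuotient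
        hf hfa (hsub ha) (hsub (ht hb)), Finset.sum_add_distrib,
        Finset.sum_eq_single_of_mem a hat fun b _ hba => analyticOrderAt_id_sub_const_of_ne hba,
        analyticOrderAt_id_sub_const_self]
    have hg : ‖g z‖ ≤ M * (2 * ρ * s / (ρ ^ 2 + s ^ 2)) ^ N := by
      refine ih (hf.blaschkeQuotient (hsub ha)) (fun z hz => ?_) ?_
      · rw [norm_blaschkeQuotient_of_mem_sphere hfa (hsub ha) hz]
        exact hM z hz
      · rw [hsum, Nat.cast_succ, add_comm] at hN
        exact (ENat.add_le_add_iff_left ENat.one_ne_top).1 hN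
    calc ‖f z‖ ≤ 2 * ρ * s / (ρ ^ 2 + s ^ 2) * ‖g z‖ :=
          norm_le_mul_norm_blaschkeQuotient hsρ hfa ha hz
      _ ≤ 2 * ρ * s / (ρ ^ 2 + s ^ 2) * (M * (2 * ρ * s / (ρ ^ 2 + s ^ 2)) ^ N) := by
          gcongr
      _ = M * (2 * ρ * s / (ρ ^ 2 + s ^ 2)) ^ (N + 1) := by ring

lemma natCast_le_of_le_mul_pow {m M q : ℝ} {N : ℕ} (hm : 0 < m) (hq₀ : 0 < q) (hq₁ : q < 1)
    (hmM : m ≤ M * q ^ N) : (N : ℝ) ≤ (Real.log q⁻¹)⁻¹ * Real.log (M / m) := by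
  have hM : 0 < M := pos_of_mul_pos_left (hm.trans_le hmM) (by positivity)
  have hlog := Real.log_le_log hm hmM
  rw [Real.log_mul hM.ne' (by positivity), Real.log_pow] at hlog
  rw [inv_mul_eq_div, le_div_iff₀ (Real.log_pos (one_lt_inv_iff₀.2 ⟨hq₀, hq₁⟩)), Real.log_inv,
    Real.log_div hM.ne' hm.ne']
  linarith

/-- Jensen's bound: there is an absolute constant `C > 0` such that for every function `h`
holomorphic on a disc `D(w,r)`, bounded by `M` there, and with `|h| ≥ m` somewhere on the
closed half-disc (with `m > 0`), the number of zeros of `h` in the closed disc of radius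
`r/2`, counted with multiplicity, is at most `C log(M/m)`. -/
theorem jensen_zero_count_bound :
    ∃ C : ℝ, 0 < C ∧
      ∀ (w : ℂ) (r : ℝ), 0 < r →
        ∀ h : ℂ → ℂ, DifferentiableOn ℂ h (ball w r) →
          ∀ M m : ℝ, (∀ z ∈ ball w r, ‖h z‖ ≤ M) →
            0 < m → (∃ z ∈ closedBall w (r / 2), m ≤ ‖h z‖) →
            (∑' z : {z : ℂ // z ∈ closedBall w (r / 2) ∧ h z = 0},
                ((vanishingOrder h z : ℕ∞) : ℝ≥0∞))
              ≤ ENNReal.ofReal (C * Real.log (M / m)) := by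
  refine ⟨(Real.log (12 / 13)⁻¹)⁻¹, inv_pos.2 (Real.log_pos (by norm_num)), ?_⟩
  intro w r hr h hd M m hM hm ⟨z₀, hz₀, hmz₀⟩
  have hρ : closedBall w (3 * r / 4) ⊆ ball w r := closedBall_subset_ball (by linarith)
  have hhalf : closedBall w (r / 2) ⊆ ball w r := closedBall_subset_ball (by linarith)
  refine tsum_le_of_sum_le' bot_le fun T => ?_
  set t := T.map (Function.Embedding.subtype _)
  have hN : ((∑ z ∈ T, vanishingOrder h z : ℕ) : ℕ∞) ≤ ∑ a ∈ t, analyticOrderAt h a := by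
    rw [Finset.sum_map, Nat.cast_sum]
    exact Finset.sum_le_sum fun z _ => vanishingOrder_le_analyticOrderAt
      (hd.analyticAt (isOpen_ball.mem_nhds (hhalf z.2.1)))
  have hbound := norm_le_mul_pow_of_le_sum_analyticOrderAt (by linarith) (hd.mono hρ)
    (fun z hz => hM z (hρ (sphere_subset_closedBall hz)))
    (fun _ hx => by obtain ⟨z, -, rfl⟩ := Finset.mem_map.1 hx; exact z.2.1) hN hz₀
  have hq : 2 * (3 * r / 4) * (r / 2) / ((3 * r / 4) ^ 2 + (r / 2) ^ 2) = 12 / 13 := by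
    field_simp
    ring
  rw [hq] at hbound
  simp only [ENat.toENNReal_coe]
  rw [← Nat.cast_sum, ← ENNReal.ofReal_natCast]
  exact ENNReal.ofReal_le_ofReal
    (natCast_le_of_le_mul_pow hm (by norm_num) (by norm_num) (hmz₀.trans hbound))
end
end

section
/- For every integer E ≥ 1 and every odd integer l ≥ 1, there do not exist ξ₁, …, ξ_l ∈ ℤ² with ‖ξᵢ‖² = E for all i and ξ₁ + ξ₂ + ⋯ + ξ_l = 0. -/
/-- Square mod 4 together with parity. -/
lemma sq_mod_four (a : ℤ) :
    (a % 2 = 0 ∧ a ^ 2 % 4 = 0) ∨ (a % 2 = 1 ∧ a ^ 2 % 4 = 1) := by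
  rcases Int.even_or_odd a with ⟨k, hk⟩ | ⟨k, hk⟩
  · left
    have h : a ^ 2 = 4 * k ^ 2 := by rw [hk]; ring
    constructor
    · omega
    · rw [h]; exact Int.mul_emod_right 4 _
  · right
    have h : a ^ 2 = 4 * (k ^ 2 + k) + 1 := by rw [hk]; ring
    generalize k ^ 2 + k = m at h
    omega

lemma sum_odd_parity {l : ℕ} (f : Fin l → ℤ) (h : ∀ i, f i % 2 = 1) :
    (∑ i, f i) % 2 = (l : ℤ) % 2 := by
  rw [Finset.sum_int_mod]
  simp only [h]
  simp

/-- There are no odd-length spectral correlations: for every `E ≥ 1` and odd `l ≥ 1`,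
no `l`-tuple of lattice points on the circle of radius `√E` sums to zero. -/
theorem no_odd_spectral_correlations :
    ∀ E : ℕ, 1 ≤ E → ∀ l : ℕ, Odd l → 1 ≤ l →
      ¬ ∃ ξ : Fin l → ℤ × ℤ,
          (∀ i, (ξ i).1 ^ 2 + (ξ i).2 ^ 2 = (E : ℤ)) ∧ ∑ i, ξ i = 0 := by
  intro E
  induction E using Nat.strong_induction_on with
  | _ E ih =>
    intro hE l hl hl1 ⟨ξ, hnorm, hsum⟩
    have hlodd : (l : ℤ) % 2 = 1 := by
      obtain ⟨k, hk⟩ := hl; subst hk; push_cast; omega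
    have hsum1 : ∑ i, (ξ i).1 = 0 := by
      have := congrArg Prod.fst hsum
      simpa [Prod.fst_sum] using this
    have hsum2 : ∑ i, (ξ i).2 = 0 := by
      have := congrArg Prod.snd hsum
      simpa [Prod.snd_sum] using this
    have hE4 : (E : ℤ) % 4 = (E % 4 : ℕ) := by push_cast; omega
    by_cases hodd : (E : ℤ) % 2 = 1
    · -- E odd: each (ξ i).1 + (ξ i).2 is odd
      have hpar : ∀ i, ((ξ i).1 + (ξ i).2) % 2 = 1 := by
        intro i
        have h1 := sq_mod_four (ξ i).1
        have h2 := sq_mod_four (ξ i).2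
        have hn := hnorm i
        omega
      have := sum_odd_parity _ hpar
      have hz : (∑ i, ((ξ i).1 + (ξ i).2)) = 0 := by
        rw [Finset.sum_add_distrib, hsum1, hsum2, add_zero]
      omega
    · by_cases h2 : (E : ℤ) % 4 = 2
      · -- E ≡ 2 mod 4: each (ξ i).1 is odd
        have hpar : ∀ i, (ξ i).1 % 2 = 1 := by
          intro i
          have h1 := sq_mod_four (ξ i).1
          have h2' := sq_mod_four (ξ i).2
          have hn := hnorm i
          omega
        have := sum_odd_parity _ hpar
        omega
      · -- E ≡ 0 mod 4: descend
        have h0 : (E : ℤ) % 4 = 0 := by omega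
        have heven : ∀ i, (ξ i).1 % 2 = 0 ∧ (ξ i).2 % 2 = 0 := by
          intro i
          have h1 := sq_mod_four (ξ i).1
          have h2' := sq_mod_four (ξ i).2
          have hn := hnorm i
          omega
        have hE4dvd : 4 ∣ E := by omega
        have hE4ge : 1 ≤ E / 4 := by omega
        have hE4lt : E / 4 < E := by omega
        refine ih (E / 4) hE4lt hE4ge l hl hl1 ⟨fun i => ((ξ i).1 / 2, (ξ i).2 / 2), ?_, ?_⟩
        · intro i
          have h1 := (heven i).1
          have h2' := (heven i).2
          have hd1 : (2 : ℤ) ∣ (ξ i).1 := by omega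
          have hd2 : (2 : ℤ) ∣ (ξ i).2 := by omega
          obtain ⟨a, ha⟩ := hd1
          obtain ⟨b, hb⟩ := hd2
          have hn := hnorm i
          show ((ξ i).1 / 2) ^ 2 + ((ξ i).2 / 2) ^ 2 = ((E / 4 : ℕ) : ℤ)
          rw [ha, hb] at hn ⊢
          have hca : (2 * a) / 2 = a := by omega
          have hcb : (2 * b) / 2 = b := by omega
          rw [hca, hcb]
          have hcast : ((E / 4 : ℕ) : ℤ) = (E : ℤ) / 4 := by
            push_cast [Nat.cast_div hE4dvd]; omega
          have : (2*a)^2 + (2*b)^2 = 4 * (a^2 + b^2) := by ring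
          rw [this] at hn
          omega
        · have e1 : ∑ i, (ξ i).1 / 2 = 0 := by
            have : (2:ℤ) * ∑ i, (ξ i).1 / 2 = ∑ i, (ξ i).1 := by
              rw [Finset.mul_sum]
              refine Finset.sum_congr rfl fun i _ => ?_
              have := (heven i).1
              omega
            omega
          have e2 : ∑ i, (ξ i).2 / 2 = 0 := by
            have : (2:ℤ) * ∑ i, (ξ i).2 / 2 = ∑ i, (ξ i).2 := by
              rw [Finset.mul_sum]
              refine Finset.sum_congr rfl fun i _ => ?_
              have := (heven i).2
              omega
            omega
          ext
          · simpa [Prod.fst_sum] using e1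
          · simpa [Prod.snd_sum] using e2
end
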